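/- Let x* ∈ D and y* := (α − p_A·x*)/p_B. If μ_A + σ̃_A·Φ⁻¹(1 − x*) = μ_B + σ̃_B·Φ⁻¹(1 − y*) (a common threshold on posterior expected quality), then Q(x) < Q(x*) for every x ∈ D with x ≠ x*; that is, the Bayesian-optimal selection rate is the unique maximizer of the selection utility Q on D. Moreover, x* equals x^opt, the Bayesian-optimal selection rate of group A. -/

import Mathlib

noncomputable def gpdf (t : ℝ) : ℝ := Real.exp (-t ^ 2 / 2) / Real.sqrt (2 * Real.pi)

noncomputable def gcdf (x : ℝ) : ℝ := ∫ t in Set.Iic x, gpdf t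

noncomputable def gquant : ℝ → ℝ := Function.invFun gcdf

noncomputable def sHat (η σ : ℝ) : ℝ := Real.sqrt (η ^ 2 + σ ^ 2)

noncomputable def sTil (η σ : ℝ) : ℝ := η ^ 2 / sHat η σ

def Dset (pA α : ℝ) : Set ℝ :=
  {x | x ∈ Set.Ioo (0:ℝ) 1 ∧ (α - pA * x) / (1 - pA) ∈ Set.Ioo (0:ℝ) 1}

noncomputable def Qfun (pA α μA μB sA sB x : ℝ) : ℝ :=
  (1 / α) * (pA * (μA * x + sA * gpdf (gquant (1 - x)))
    + (1 - pA) * (μB * ((α - pA * x) / (1 - pA))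
      + sB * gpdf (gquant (1 - (α - pA * x) / (1 - pA)))))

noncomputable def clampTo (lo hi x : ℝ) : ℝ := min hi (max lo x)

/-!
Each group contributes `g(x) = μ x + s φ(Φ⁻¹(1 - x))` to `α Q`; `g` is strictly concave with
slope `μ + s Φ⁻¹(1 - x)`, the posterior-quality threshold at which a fraction `x` of the group
is selected. With `a = Φ⁻¹(1 - u)`, `b = Φ⁻¹(1 - v)` the tangent inequality at `v` is
`∫_a^b (t - b) φ(t) dt < 0`, because `φ' = -t φ`. The budget fixes `p_A x + p_B y = α`, so at
a rate `x*` where both slopes equal a common threshold `θ` the first-order terms of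
`Q(x) - Q(x*)` cancel and strict concavity leaves `Q(x) < Q(x*)`. Finally `θ` solves the
equation defining `θ̃`, whose left side is strictly decreasing in the threshold, so `θ = θ̃`.
-/

open MeasureTheory ProbabilityTheory Set Filter Topology

lemma gpdf_eq_gaussianPDFReal : gpdf = gaussianPDFReal 0 1 := by
  funext t
  simp [gpdf, gaussianPDFReal, div_eq_inv_mul]

lemma gpdf_pos (t : ℝ) : 0 < gpdf t :=
  gpdf_eq_gaussianPDFReal ▸ gaussianPDFReal_pos 0 1 t one_ne_zero

@[fun_prop] lemma continuous_gpdf : Continuous gpdf := by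
  unfold gpdf; fun_prop

lemma integrable_gpdf : Integrable gpdf :=
  gpdf_eq_gaussianPDFReal ▸ integrable_gaussianPDFReal 0 1

lemma hasDerivAt_gpdf (t : ℝ) : HasDerivAt gpdf (-t * gpdf t) t := by
  have h : HasDerivAt (fun s : ℝ => -s ^ 2 / 2) (-t) t :=
    ((hasDerivAt_pow 2 t).neg.div_const 2).congr_deriv (by ring)
  exact (h.exp.div_const (Real.sqrt (2 * Real.pi))).congr_deriv (by unfold gpdf; ring)

lemma integral_mul_gpdf (a b : ℝ) : ∫ t in a..b, t * gpdf t = gpdf a - gpdf b := by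
  rw [intervalIntegral.integral_eq_sub_of_hasDerivAt (f := -gpdf)
    (fun t _ => (hasDerivAt_gpdf t).neg.congr_deriv (by ring))
    ((by fun_prop : Continuous fun t => t * gpdf t).intervalIntegrable a b), Pi.neg_apply,
    Pi.neg_apply]
  ring

lemma gcdf_eq_cdf : gcdf = cdf (gaussianReal 0 1) := by
  funext x
  rw [cdf_eq_real, measureReal_def, gaussianReal_apply_eq_integral 0 one_ne_zero,
    ← gpdf_eq_gaussianPDFReal,
    ENNReal.toReal_ofReal (setIntegral_nonneg measurableSet_Iic fun t _ => (gpdf_pos t).le)]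
  rfl

lemma gcdf_sub_gcdf (a b : ℝ) : gcdf b - gcdf a = ∫ t in a..b, gpdf t :=
  intervalIntegral.integral_Iic_sub_Iic integrable_gpdf.integrableOn integrable_gpdf.integrableOn

lemma gcdf_strictMono : StrictMono gcdf := fun a b hab => by
  have := intervalIntegral.intervalIntegral_pos_of_pos_on integrable_gpdf.intervalIntegrable
    (fun t _ => gpdf_pos t) hab
  linarith [gcdf_sub_gcdf a b]

lemma continuous_gcdf : Continuous gcdf := by
  have h : gcdf = fun b => gcdf 0 + ∫ t in (0:ℝ)..b, gpdf t := by
    funext b; linarith [gcdf_sub_gcdf 0 b]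
  rw [h]
  exact continuous_const.add
    (intervalIntegral.continuous_primitive (fun _ _ => integrable_gpdf.intervalIntegrable) 0)

lemma gcdf_gquant {p : ℝ} (hp : p ∈ Ioo (0:ℝ) 1) : gcdf (gquant p) = p := by
  refine Function.invFun_eq (mem_range_of_exists_le_of_exists_ge continuous_gcdf ?_ ?_)
  · rw [gcdf_eq_cdf]
    exact ((tendsto_cdf_atBot _).eventually (eventually_le_nhds hp.1)).exists
  · rw [gcdf_eq_cdf]
    exact ((tendsto_cdf_atTop _).eventually (eventually_ge_nhds hp.2)).exists

lemma integral_sub_mul_gpdf_neg {a b : ℝ} (hab : a ≠ b) :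
    ∫ t in a..b, (t - b) * gpdf t < 0 := by
  rcases hab.lt_or_gt with h | h
  · have hpos : 0 < ∫ t in a..b, -((t - b) * gpdf t) :=
      intervalIntegral.intervalIntegral_pos_of_pos_on
        ((by fun_prop : Continuous fun t => -((t - b) * gpdf t)).intervalIntegrable a b)
        (fun t ht => by nlinarith [ht.2, gpdf_pos t]) h
    rw [intervalIntegral.integral_neg] at hpos
    linarith
  · have hpos : 0 < ∫ t in b..a, (t - b) * gpdf t :=
      intervalIntegral.intervalIntegral_pos_of_pos_on
        ((by fun_prop : Continuous fun t => (t - b) * gpdf t).intervalIntegrable b a)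
        (fun t ht => mul_pos (sub_pos.mpr ht.1) (gpdf_pos t)) h
    rw [intervalIntegral.integral_symm]
    linarith

lemma gpdf_sub_gpdf_lt {a b : ℝ} (hab : a ≠ b) : gpdf a - gpdf b < b * (gcdf b - gcdf a) := by
  have h := integral_sub_mul_gpdf_neg hab
  simp only [sub_mul] at h
  rw [intervalIntegral.integral_sub
    ((by fun_prop : Continuous fun t => t * gpdf t).intervalIntegrable a b)
    ((by fun_prop : Continuous fun t => b * gpdf t).intervalIntegrable a b),
    intervalIntegral.integral_const_mul, integral_mul_gpdf] at h
  rw [gcdf_sub_gcdf]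
  linarith

noncomputable def groupUtility (μ s x : ℝ) : ℝ := μ * x + s * gpdf (gquant (1 - x))

lemma groupUtility_sub_lt {μ s u v : ℝ} (hs : 0 < s) (hu : u ∈ Ioo (0:ℝ) 1)
    (hv : v ∈ Ioo (0:ℝ) 1) (huv : u ≠ v) :
    groupUtility μ s u - groupUtility μ s v < (μ + s * gquant (1 - v)) * (u - v) := by
  have ha : gcdf (gquant (1 - u)) = 1 - u :=
    gcdf_gquant ⟨by linarith [hu.2], by linarith [hu.1]⟩
  have hb : gcdf (gquant (1 - v)) = 1 - v :=
    gcdf_gquant ⟨by linarith [hv.2], by linarith [hv.1]⟩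
  have hab : gquant (1 - u) ≠ gquant (1 - v) := fun h =>
    huv (by linarith [ha.symm.trans (h ▸ hb)])
  have key := mul_lt_mul_of_pos_left (gpdf_sub_gpdf_lt hab) hs
  rw [ha, hb] at key
  unfold groupUtility
  linarith

lemma Qfun_eq_groupUtility (pA α μA μB sA sB x : ℝ) :
    Qfun pA α μA μB sA sB x = (1 / α) * (pA * groupUtility μA sA x
      + (1 - pA) * groupUtility μB sB ((α - pA * x) / (1 - pA))) :=
  rfl

lemma Qfun_lt_of_common_threshold {pA α μA μB sA sB x xs : ℝ} (hpA : pA ∈ Ioo (0:ℝ) 1)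
    (hα : 0 < α) (hsA : 0 < sA) (hsB : 0 < sB) (hx : x ∈ Dset pA α) (hxs : xs ∈ Dset pA α)
    (hne : x ≠ xs)
    (hcommon : μA + sA * gquant (1 - xs) = μB + sB * gquant (1 - (α - pA * xs) / (1 - pA))) :
    Qfun pA α μA μB sA sB x < Qfun pA α μA μB sA sB xs := by
  have hpB : 0 < 1 - pA := sub_pos.mpr hpA.2
  set y := (α - pA * x) / (1 - pA)
  set ys := (α - pA * xs) / (1 - pA)
  have hbudget : pA * (x - xs) + (1 - pA) * (y - ys) = 0 := by
    simp only [y, ys]; field_simp; ring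
  have hyne : y ≠ ys := fun h => hne <| by
    rw [h, sub_self, mul_zero, add_zero] at hbudget
    exact sub_eq_zero.mp ((mul_eq_zero.mp hbudget).resolve_left hpA.1.ne')
  have hA := mul_lt_mul_of_pos_left (groupUtility_sub_lt (μ := μA) hsA hx.1 hxs.1 hne) hpA.1
  have hB := mul_lt_mul_of_pos_left (groupUtility_sub_lt (μ := μB) hsB hx.2 hxs.2 hyne) hpB
  rw [← hcommon] at hB
  have hfirst : pA * ((μA + sA * gquant (1 - xs)) * (x - xs))
      + (1 - pA) * ((μA + sA * gquant (1 - xs)) * (y - ys)) = 0 := by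
    linear_combination (μA + sA * gquant (1 - xs)) * hbudget
  rw [Qfun_eq_groupUtility, Qfun_eq_groupUtility]
  exact mul_lt_mul_of_pos_left (by linarith) (one_div_pos.mpr hα)

/-- The fraction of a group of mean `μ` and posterior spread `s` whose posterior expected quality
exceeds the threshold `θ`. -/
noncomputable def selectionRate (μ s θ : ℝ) : ℝ := 1 - gcdf ((θ - μ) / s)

lemma selectionRate_strictAnti {μ s : ℝ} (hs : 0 < s) : StrictAnti (selectionRate μ s) :=
  fun _ _ h =>
    sub_lt_sub_left (gcdf_strictMono (div_lt_div_of_pos_right (sub_lt_sub_right h μ) hs)) 1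

lemma selectionRate_threshold {μ s x : ℝ} (hs : s ≠ 0) (hx : x ∈ Ioo (0:ℝ) 1) :
    selectionRate μ s (μ + s * gquant (1 - x)) = x := by
  rw [selectionRate, add_sub_cancel_left, mul_div_cancel_left₀ _ hs,
    gcdf_gquant ⟨by linarith [hx.2], by linarith [hx.1]⟩]
  ring

lemma eq_selectionRate_of_common_threshold {pA α μA μB sA sB θ xs : ℝ}
    (hpA : pA ∈ Ioo (0:ℝ) 1) (hsA : 0 < sA) (hsB : 0 < sB) (hxs : xs ∈ Dset pA α)
    (hcommon : μA + sA * gquant (1 - xs) = μB + sB * gquant (1 - (α - pA * xs) / (1 - pA)))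
    (hθ : pA * selectionRate μA sA θ + (1 - pA) * selectionRate μB sB θ = α) :
    xs = selectionRate μA sA θ := by
  have hpB : 0 < 1 - pA := sub_pos.mpr hpA.2
  set θs := μA + sA * gquant (1 - xs)
  have hrateA : selectionRate μA sA θs = xs := selectionRate_threshold hsA.ne' hxs.1
  have hrateB : selectionRate μB sB θs = (α - pA * xs) / (1 - pA) := by
    rw [hcommon]; exact selectionRate_threshold hsB.ne' hxs.2
  have hmass :
      StrictAnti fun θ => pA * selectionRate μA sA θ + (1 - pA) * selectionRate μB sB θ :=
    ((selectionRate_strictAnti hsA).const_mul hpA.1).add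
      ((selectionRate_strictAnti hsB).const_mul hpB)
  have hθs : pA * selectionRate μA sA θs + (1 - pA) * selectionRate μB sB θs = α := by
    rw [hrateA, hrateB]; field_simp; ring
  rw [hmass.injective (hθ.trans hθs.symm), hrateA]

lemma sTil_pos {η : ℝ} (σ : ℝ) (hη : η ≠ 0) : 0 < sTil η σ := by
  unfold sTil sHat; positivity

theorem stmt5_general (pA α μA μB ηA ηB σA σB θt xstar : ℝ)
    (hpA : pA ∈ Set.Ioo (0:ℝ) 1) (hα : α ∈ Set.Ioo (0:ℝ) 1)
    (hηA : 0 < ηA) (hηB : 0 < ηB)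
    (hxD : xstar ∈ Dset pA α)
    (hcommon : μA + sTil ηA σA * gquant (1 - xstar)
        = μB + sTil ηB σB * gquant (1 - (α - pA * xstar) / (1 - pA)))
    (hθt : pA * (1 - gcdf ((θt - μA) / sTil ηA σA))
        + (1 - pA) * (1 - gcdf ((θt - μB) / sTil ηB σB)) = α) :
    (∀ x ∈ Dset pA α, x ≠ xstar →
        Qfun pA α μA μB (sTil ηA σA) (sTil ηB σB) x
          < Qfun pA α μA μB (sTil ηA σA) (sTil ηB σB) xstar)
    ∧ xstar = 1 - gcdf ((θt - μA) / sTil ηA σA) := by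
  have hsA := sTil_pos σA hηA.ne'
  have hsB := sTil_pos σB hηB.ne'
  exact ⟨fun x hx hne => Qfun_lt_of_common_threshold hpA hα.1 hsA hsB hx hxD hne hcommon,
    eq_selectionRate_of_common_threshold hpA hsA hsB hxD hcommon hθt⟩

/-- a selection rate `x*` achieving a common posterior-quality
threshold is the unique maximizer of `Q` on `D`, and equals the
Bayesian-optimal selection rate of group `A`. -/
theorem stmt5 (pA α μA μB ηA ηB σA σB θt xstar : ℝ)
    (hpA : pA ∈ Set.Ioo (0:ℝ) 1) (hα : α ∈ Set.Ioo (0:ℝ) 1)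
    (hηA : 0 < ηA) (hηB : 0 < ηB) (hσA : 0 < σA) (hσB : 0 < σB)
    (hxD : xstar ∈ Dset pA α)
    (hcommon : μA + sTil ηA σA * gquant (1 - xstar)
        = μB + sTil ηB σB * gquant (1 - (α - pA * xstar) / (1 - pA)))
    (hθt : pA * (1 - gcdf ((θt - μA) / sTil ηA σA))
        + (1 - pA) * (1 - gcdf ((θt - μB) / sTil ηB σB)) = α) :
    (∀ x ∈ Dset pA α, x ≠ xstar →
        Qfun pA α μA μB (sTil ηA σA) (sTil ηB σB) x
          < Qfun pA α μA μB (sTil ηA σA) (sTil ηB σB) xstar)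
    ∧ xstar = 1 - gcdf ((θt - μA) / sTil ηA σA) :=
  stmt5_general pA α μA μB ηA ηB σA σB θt xstar hpA hα hηA hηB hxD hcommon hθt
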